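/- arXiv:2307.00820 — 2 statements merged into one kernel-verified Lean document; each statement's English description precedes it below -/
import Mathlib

section
/- Let L ≥ 2 be an integer, N = 2^L, ℓ ∈ {1,…,L−1}, and let X, Y ∈ ℂ^{N×N} satisfy supp(X) ⊆ supp(J_{2^ℓ} ⊗ I_{N/2^ℓ}) and supp(Y) ⊆ supp(I_{2^ℓ} ⊗ J_{N/2^ℓ}). Then for every i ∈ {1,…,N/2^ℓ} and every j ∈ {1,…,2^ℓ}, the submatrix (XY)_{R^(ℓ)_i, C^(ℓ)_j} of the product XY, obtained by keeping the rows indexed by R^(ℓ)_i and the columns indexed by C^(ℓ)_j, has rank at most 1. -/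
open Matrix Kronecker

/-- The `n × n` all-ones matrix `J_n`. -/
def Jmat (n : ℕ) : Matrix (Fin n) (Fin n) ℂ := Matrix.of fun _ _ => 1

lemma two_pow_div (L ℓ : ℕ) (h : ℓ ≤ L) : 2 ^ L / 2 ^ ℓ = 2 ^ (L - ℓ) :=
  Nat.pow_div h (by norm_num)

lemma two_pow_mul_div (L ℓ : ℕ) (h : ℓ ≤ L) : 2 ^ ℓ * (2 ^ L / 2 ^ ℓ) = 2 ^ L :=
  Nat.mul_div_cancel' (pow_dvd_pow 2 h)

lemma bfly_dim (L ℓ : ℕ) (h1 : 1 ≤ ℓ) (h2 : ℓ ≤ L) :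
    2 ^ (ℓ - 1) * (2 * (2 ^ L / 2 ^ ℓ)) = 2 ^ L := by
  rw [two_pow_div L ℓ h2, show (2 : ℕ) * 2 ^ (L - ℓ) = 2 ^ (L - ℓ + 1) by rw [pow_succ]; ring,
    ← pow_add]
  congr 1
  omega

/-- Reindexing equivalence `Fin 2^(ℓ-1) × (Fin 2 × Fin (2^L/2^ℓ)) ≃ Fin 2^L`,
sending `(a, (b, c))` to the lexicographic index `a·(2·2^L/2^ℓ) + b·(2^L/2^ℓ) + c`. -/
def bflyEquiv (L ℓ : ℕ) (h1 : 1 ≤ ℓ) (h2 : ℓ ≤ L) :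
    Fin (2 ^ (ℓ - 1)) × (Fin 2 × Fin (2 ^ L / 2 ^ ℓ)) ≃ Fin (2 ^ L) :=
  ((Equiv.refl _).prodCongr finProdFinEquiv).trans
    (finProdFinEquiv.trans (finCongr (bfly_dim L ℓ h1 h2)))

/-- The butterfly support `S_ℓ = I_{2^{ℓ-1}} ⊗ J_2 ⊗ I_{N/2^ℓ}`, as an `N × N` matrix,
`N = 2^L`. -/
def bflySupp (L ℓ : ℕ) (h1 : 1 ≤ ℓ) (h2 : ℓ ≤ L) : Matrix (Fin (2 ^ L)) (Fin (2 ^ L)) ℂ :=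
  Matrix.reindex (bflyEquiv L ℓ h1 h2) (bflyEquiv L ℓ h1 h2)
    ((1 : Matrix (Fin (2 ^ (ℓ - 1))) (Fin (2 ^ (ℓ - 1))) ℂ) ⊗ₖ
      (Jmat 2 ⊗ₖ (1 : Matrix (Fin (2 ^ L / 2 ^ ℓ)) (Fin (2 ^ L / 2 ^ ℓ)) ℂ)))

/-- Reindexing equivalence `Fin 2^ℓ × Fin (2^L/2^ℓ) ≃ Fin 2^L` (lexicographic). -/
def blockEquiv (L ℓ : ℕ) (h : ℓ ≤ L) : Fin (2 ^ ℓ) × Fin (2 ^ L / 2 ^ ℓ) ≃ Fin (2 ^ L) :=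
  finProdFinEquiv.trans (finCongr (two_pow_mul_div L ℓ h))

/-- The matrix `J_{2^ℓ} ⊗ I_{N/2^ℓ}`, as an `N × N` matrix, `N = 2^L`. -/
def JkronI (L ℓ : ℕ) (h : ℓ ≤ L) : Matrix (Fin (2 ^ L)) (Fin (2 ^ L)) ℂ :=
  Matrix.reindex (blockEquiv L ℓ h) (blockEquiv L ℓ h)
    (Jmat (2 ^ ℓ) ⊗ₖ (1 : Matrix (Fin (2 ^ L / 2 ^ ℓ)) (Fin (2 ^ L / 2 ^ ℓ)) ℂ))

/-- The matrix `I_{2^ℓ} ⊗ J_{N/2^ℓ}`, as an `N × N` matrix, `N = 2^L`. -/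
def IkronJ (L ℓ : ℕ) (h : ℓ ≤ L) : Matrix (Fin (2 ^ L)) (Fin (2 ^ L)) ℂ :=
  Matrix.reindex (blockEquiv L ℓ h) (blockEquiv L ℓ h)
    ((1 : Matrix (Fin (2 ^ ℓ)) (Fin (2 ^ ℓ)) ℂ) ⊗ₖ Jmat (2 ^ L / 2 ^ ℓ))

/-- The `k`-th element of the canonical row index set `R^(ℓ)_i` (0-based):
`i + k·(N/2^ℓ)`, for `i ∈ Fin (N/2^ℓ)`, `k ∈ Fin 2^ℓ`, `N = 2^L`. -/
def rowIdx (L ℓ : ℕ) (h : ℓ ≤ L) (i : Fin (2 ^ L / 2 ^ ℓ)) (k : Fin (2 ^ ℓ)) : Fin (2 ^ L) :=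
  ⟨(i : ℕ) + (k : ℕ) * (2 ^ L / 2 ^ ℓ), by
    have hi := i.isLt
    have hk := k.isLt
    calc (i : ℕ) + (k : ℕ) * (2 ^ L / 2 ^ ℓ)
        < 2 ^ L / 2 ^ ℓ + (k : ℕ) * (2 ^ L / 2 ^ ℓ) := by omega
      _ = ((k : ℕ) + 1) * (2 ^ L / 2 ^ ℓ) := by ring
      _ ≤ 2 ^ ℓ * (2 ^ L / 2 ^ ℓ) := Nat.mul_le_mul_right _ (by omega)
      _ = 2 ^ L := two_pow_mul_div L ℓ h⟩

/-- The `k`-th element of the canonical column index set `C^(ℓ)_j` (0-based):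
`j·(N/2^ℓ) + k`, for `j ∈ Fin 2^ℓ`, `k ∈ Fin (N/2^ℓ)`, `N = 2^L`. -/
def colIdx (L ℓ : ℕ) (h : ℓ ≤ L) (j : Fin (2 ^ ℓ)) (k : Fin (2 ^ L / 2 ^ ℓ)) : Fin (2 ^ L) :=
  ⟨(j : ℕ) * (2 ^ L / 2 ^ ℓ) + (k : ℕ), by
    have hj := j.isLt
    have hk := k.isLt
    calc (j : ℕ) * (2 ^ L / 2 ^ ℓ) + (k : ℕ)
        < (j : ℕ) * (2 ^ L / 2 ^ ℓ) + (2 ^ L / 2 ^ ℓ) := by omega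
      _ = ((j : ℕ) + 1) * (2 ^ L / 2 ^ ℓ) := by ring
      _ ≤ 2 ^ ℓ * (2 ^ L / 2 ^ ℓ) := Nat.mul_le_mul_right _ (by omega)
      _ = 2 ^ L := two_pow_mul_div L ℓ h⟩

/-- The squared Frobenius norm `‖A‖_F²` of a complex matrix. -/
noncomputable def frobSq {m n : Type*} [Fintype m] [Fintype n] (A : Matrix m n ℂ) : ℝ :=
  ∑ i, ∑ j, ‖A i j‖ ^ 2

lemma blockEquiv_symm_fst (L ℓ : ℕ) (h : ℓ ≤ L) (a : Fin (2 ^ L)) :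
    (((blockEquiv L ℓ h).symm a).1 : ℕ) = (a : ℕ) / (2 ^ L / 2 ^ ℓ) := rfl

lemma blockEquiv_symm_snd (L ℓ : ℕ) (h : ℓ ≤ L) (a : Fin (2 ^ L)) :
    (((blockEquiv L ℓ h).symm a).2 : ℕ) = (a : ℕ) % (2 ^ L / 2 ^ ℓ) := rfl

lemma JkronI_ne_zero (L ℓ : ℕ) (h : ℓ ≤ L) (a b : Fin (2 ^ L))
    (hne : JkronI L ℓ h a b ≠ 0) :
    (a : ℕ) % (2 ^ L / 2 ^ ℓ) = (b : ℕ) % (2 ^ L / 2 ^ ℓ) := by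
  rw [JkronI, Matrix.reindex_apply, Matrix.submatrix_apply, Matrix.kroneckerMap_apply] at hne
  by_contra hc
  apply hne
  have hne2 : ((blockEquiv L ℓ h).symm a).2 ≠ ((blockEquiv L ℓ h).symm b).2 := by
    intro he
    exact hc (by rw [← blockEquiv_symm_snd L ℓ h a, ← blockEquiv_symm_snd L ℓ h b, he])
  rw [Matrix.one_apply_ne hne2, mul_zero]

lemma IkronJ_ne_zero (L ℓ : ℕ) (h : ℓ ≤ L) (a b : Fin (2 ^ L))
    (hne : IkronJ L ℓ h a b ≠ 0) :
    (a : ℕ) / (2 ^ L / 2 ^ ℓ) = (b : ℕ) / (2 ^ L / 2 ^ ℓ) := by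
  rw [IkronJ, Matrix.reindex_apply, Matrix.submatrix_apply, Matrix.kroneckerMap_apply] at hne
  by_contra hc
  apply hne
  have hne1 : ((blockEquiv L ℓ h).symm a).1 ≠ ((blockEquiv L ℓ h).symm b).1 := by
    intro he
    exact hc (by rw [← blockEquiv_symm_fst L ℓ h a, ← blockEquiv_symm_fst L ℓ h b, he])
  rw [Matrix.one_apply_ne hne1, zero_mul]

lemma rank_vecMulVec_le_one {m n : Type*} [Fintype m] [Fintype n] [DecidableEq m]
    (u : m → ℂ) (v : n → ℂ) : (Matrix.vecMulVec u v).rank ≤ 1 := by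
  rw [Matrix.vecMulVec_eq (Fin 1)]
  calc (Matrix.replicateCol (Fin 1) u * Matrix.replicateRow (Fin 1) v).rank
      ≤ (Matrix.replicateCol (Fin 1) u).rank := Matrix.rank_mul_le_left _ _
    _ ≤ Fintype.card (Fin 1) := Matrix.rank_le_card_width _
    _ = 1 := by simp

/-- For `L ≥ 2`, `N = 2^L`, `ℓ ∈ {1,…,L-1}`, if `X, Y ∈ ℂ^{N×N}` satisfy
`supp(X) ⊆ supp(J_{2^ℓ} ⊗ I_{N/2^ℓ})` and `supp(Y) ⊆ supp(I_{2^ℓ} ⊗ J_{N/2^ℓ})`, then every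
submatrix `(XY)_{R^(ℓ)_i, C^(ℓ)_j}` of the product `XY`, on the canonical row set `R^(ℓ)_i`
and column set `C^(ℓ)_j`, has rank at most `1`. -/
theorem monarch_submatrix_rank_le_one (L : ℕ) (hL : 2 ≤ L) (ℓ : ℕ) (hℓ1 : 1 ≤ ℓ)
    (hℓ2 : ℓ ≤ L - 1) (X Y : Matrix (Fin (2 ^ L)) (Fin (2 ^ L)) ℂ)
    (hX : ∀ a b, X a b ≠ 0 → JkronI L ℓ (by omega) a b ≠ 0)
    (hY : ∀ a b, Y a b ≠ 0 → IkronJ L ℓ (by omega) a b ≠ 0)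
    (i : Fin (2 ^ L / 2 ^ ℓ)) (j : Fin (2 ^ ℓ)) :
    ((X * Y).submatrix (rowIdx L ℓ (by omega) i) (colIdx L ℓ (by omega) j)).rank ≤ 1 := by
  have h : ℓ ≤ L := by omega
  have hmpos : 0 < 2 ^ L / 2 ^ ℓ :=
    Nat.div_pos (Nat.pow_le_pow_right (by norm_num) h) (by positivity)
  set b0 : Fin (2 ^ L) := colIdx L ℓ h j i with hb0
  have key : ((X * Y).submatrix (rowIdx L ℓ h i) (colIdx L ℓ h j)) =
      Matrix.vecMulVec (fun k => X (rowIdx L ℓ h i k) b0)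
        (fun k' => Y b0 (colIdx L ℓ h j k')) := by
    ext k k'
    rw [Matrix.submatrix_apply, Matrix.mul_apply, Matrix.vecMulVec_apply]
    apply Finset.sum_eq_single_of_mem b0 (Finset.mem_univ _)
    intro b _ hbne
    by_contra hc
    have hX0 : X (rowIdx L ℓ h i k) b ≠ 0 := fun h0 => hc (by rw [h0, zero_mul])
    have hY0 : Y b (colIdx L ℓ h j k') ≠ 0 := fun h0 => hc (by rw [h0, mul_zero])
    have h1 := JkronI_ne_zero L ℓ h _ _ (hX _ _ hX0)
    have h2 := IkronJ_ne_zero L ℓ h _ _ (hY _ _ hY0)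
    apply hbne
    have hrow : ((rowIdx L ℓ h i k : Fin (2 ^ L)) : ℕ) % (2 ^ L / 2 ^ ℓ) = (i : ℕ) := by
      show ((i : ℕ) + (k : ℕ) * (2 ^ L / 2 ^ ℓ)) % (2 ^ L / 2 ^ ℓ) = (i : ℕ)
      rw [Nat.add_mul_mod_self_right]
      exact Nat.mod_eq_of_lt i.isLt
    have hcol : ((colIdx L ℓ h j k' : Fin (2 ^ L)) : ℕ) / (2 ^ L / 2 ^ ℓ) = (j : ℕ) := by
      show ((j : ℕ) * (2 ^ L / 2 ^ ℓ) + (k' : ℕ)) / (2 ^ L / 2 ^ ℓ) = (j : ℕ)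
      rw [mul_comm ((j:ℕ)) _, Nat.mul_add_div hmpos, Nat.div_eq_of_lt k'.isLt, add_zero]
    have hbm : (b : ℕ) % (2 ^ L / 2 ^ ℓ) = (i : ℕ) := by rw [← h1, hrow]
    have hbd : (b : ℕ) / (2 ^ L / 2 ^ ℓ) = (j : ℕ) := by rw [h2, hcol]
    have hbeq : (b : ℕ) = (j : ℕ) * (2 ^ L / 2 ^ ℓ) + (i : ℕ) := by
      conv_lhs => rw [← Nat.div_add_mod (b : ℕ) (2 ^ L / 2 ^ ℓ)]
      rw [hbm, hbd]; ring
    exact Fin.ext hbeq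
  have hpi : ((X * Y).submatrix (rowIdx L ℓ (by omega) i) (colIdx L ℓ (by omega) j)) =
      ((X * Y).submatrix (rowIdx L ℓ h i) (colIdx L ℓ h j)) := rfl
  rw [hpi, key]
  exact rank_vecMulVec_le_one _ _
end

section
/- Let L ≥ 2 be an integer, N = 2^L, ℓ ∈ {1,…,L−1}, and let X_1, …, X_ℓ ∈ ℂ^{N×N} satisfy supp(X_p) ⊆ supp(S_p) for every p ∈ {1,…,ℓ}, where S_p := I_{2^{p−1}} ⊗ J_2 ⊗ I_{N/2^p}. Then supp(X_1 X_2 ⋯ X_ℓ) ⊆ supp(J_{2^ℓ} ⊗ I_{N/2^ℓ}). -/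
open Matrix Kronecker

/-! Write `m = N / 2^ℓ`. The support of `S_p` only links indices congruent modulo `N / 2^p`, a
multiple of `m` when `p ≤ ℓ`, so every factor `X_p` is block diagonal for the residue map
`i ↦ i mod m`. Block diagonal matrices for a fixed map are closed under products (they are the
matrices block triangular for both orientations of the order), and `J_{2^ℓ} ⊗ I_m` is nonzero
at every pair of indices with equal residues. -/

namespace Matrix

variable {m R α : Type*}

theorem BlockTriangular.list_prod [LinearOrder α] [Fintype m] [DecidableEq m] [Semiring R]
    {b : m → α} {l : List (Matrix m m R)} (hl : ∀ M ∈ l, M.BlockTriangular b) :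
    l.prod.BlockTriangular b :=
  list_prod_mem (S := blockTriangularSubsemiring R b) hl

theorem blockTriangular_and_blockTriangular_toDual_iff [LinearOrder α] [Zero R]
    {b : m → α} {M : Matrix m m R} :
    M.BlockTriangular b ∧ M.BlockTriangular (OrderDual.toDual ∘ b) ↔
      ∀ i j, b i ≠ b j → M i j = 0 := by
  refine ⟨fun ⟨hlt, hgt⟩ i j hij => ?_, fun h => ⟨fun i j hij => h i j hij.ne',
    fun i j hij => h i j (OrderDual.toDual_lt_toDual.1 hij).ne⟩⟩
  rcases hij.lt_or_gt with hij | hij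
  · exact hgt hij
  · exact hlt hij

theorem list_prod_apply_eq_zero_of_ne [LinearOrder α] [Fintype m] [DecidableEq m] [Semiring R]
    (b : m → α) {l : List (Matrix m m R)} (hl : ∀ M ∈ l, ∀ i j, b i ≠ b j → M i j = 0)
    {i j : m} (hij : b i ≠ b j) : l.prod i j = 0 := by
  have hl' := fun M hM => blockTriangular_and_blockTriangular_toDual_iff.2 (hl M hM)
  exact blockTriangular_and_blockTriangular_toDual_iff.1
    ⟨BlockTriangular.list_prod fun M hM => (hl' M hM).1,
      BlockTriangular.list_prod fun M hM => (hl' M hM).2⟩ i j hij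

end Matrix

theorem two_pow_div_dvd_two_pow_div {L ℓ q : ℕ} (hq : q ≤ ℓ) (hℓ : ℓ ≤ L) :
    2 ^ L / 2 ^ ℓ ∣ 2 ^ L / 2 ^ q := by
  rw [two_pow_div L ℓ hℓ, two_pow_div L q (hq.trans hℓ)]
  exact pow_dvd_pow 2 (by omega)

theorem bflyEquiv_val_mod (L q : ℕ) (h1 : 1 ≤ q) (h2 : q ≤ L)
    (x : Fin (2 ^ (q - 1)) × (Fin 2 × Fin (2 ^ L / 2 ^ q))) :
    (bflyEquiv L q h1 h2 x : ℕ) % (2 ^ L / 2 ^ q) = x.2.2 := by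
  simp only [bflyEquiv, Equiv.prodCongr, finProdFinEquiv, Equiv.trans_apply, Equiv.coe_fn_mk,
    Prod.map_fst, Prod.map_snd, finCongr_apply, Fin.val_cast, Equiv.coe_refl, id_eq]
  rw [mul_comm 2, mul_assoc, Nat.add_mul_mod_self_left, Nat.add_mul_mod_self_left,
    Nat.mod_eq_of_lt x.2.2.isLt]

theorem blockEquiv_val_mod (L ℓ : ℕ) (h : ℓ ≤ L) (x : Fin (2 ^ ℓ) × Fin (2 ^ L / 2 ^ ℓ)) :
    (blockEquiv L ℓ h x : ℕ) % (2 ^ L / 2 ^ ℓ) = x.2 := by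
  simpa [blockEquiv, finProdFinEquiv] using Nat.mod_eq_of_lt x.2.isLt

theorem mod_eq_of_bflySupp_apply_ne_zero {L q : ℕ} {h1 : 1 ≤ q} {h2 : q ≤ L}
    {a b : Fin (2 ^ L)} (h : bflySupp L q h1 h2 a b ≠ 0) :
    (a : ℕ) % (2 ^ L / 2 ^ q) = b % (2 ^ L / 2 ^ q) := by
  obtain ⟨u, rfl⟩ := (bflyEquiv L q h1 h2).surjective a
  obtain ⟨v, rfl⟩ := (bflyEquiv L q h1 h2).surjective b
  rw [bflyEquiv_val_mod, bflyEquiv_val_mod]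
  simp only [bflySupp, reindex_apply, submatrix_apply, Equiv.symm_apply_apply, kroneckerMap_apply,
    one_apply, mul_ite, mul_one, mul_zero, ite_mul, one_mul, zero_mul, ne_eq, ite_eq_right_iff,
    Classical.not_imp] at h
  rw [h.1]

theorem JkronI_apply_ne_zero_of_mod_eq {L ℓ : ℕ} {h : ℓ ≤ L} {a b : Fin (2 ^ L)}
    (hab : (a : ℕ) % (2 ^ L / 2 ^ ℓ) = b % (2 ^ L / 2 ^ ℓ)) : JkronI L ℓ h a b ≠ 0 := by
  obtain ⟨u, rfl⟩ := (blockEquiv L ℓ h).surjective a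
  obtain ⟨v, rfl⟩ := (blockEquiv L ℓ h).surjective b
  rw [blockEquiv_val_mod, blockEquiv_val_mod] at hab
  simp [JkronI, kroneckerMap_apply, one_apply, Jmat, Fin.ext hab]

/-- For `L ≥ 2`, `N = 2^L`, `ℓ ∈ {1,…,L-1}`: if `X_1, …, X_ℓ ∈ ℂ^{N×N}`
satisfy `supp(X_p) ⊆ supp(S_p)` for every `p ∈ {1,…,ℓ}`, then
`supp(X_1 X_2 ⋯ X_ℓ) ⊆ supp(J_{2^ℓ} ⊗ I_{N/2^ℓ})`. -/
theorem supp_prod_left_subset (L : ℕ) (ℓ : ℕ) (hℓ2 : ℓ ≤ L - 1)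
    (X : Fin ℓ → Matrix (Fin (2 ^ L)) (Fin (2 ^ L)) ℂ)
    (hX : ∀ p : Fin ℓ, ∀ a b, X p a b ≠ 0 →
      bflySupp L ((p : ℕ) + 1) (by omega) (by have := p.isLt; omega) a b ≠ 0) :
    ∀ a b, (List.ofFn X).prod a b ≠ 0 → JkronI L ℓ (by omega) a b ≠ 0 := by
  intro a b hab
  have hfactor : ∀ p (i j : Fin (2 ^ L)),
      (i : ℕ) % (2 ^ L / 2 ^ ℓ) ≠ j % (2 ^ L / 2 ^ ℓ) → X p i j = 0 :=
    fun p i j hij => not_not.1 fun hXp => hij <|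
      Nat.ModEq.of_dvd (two_pow_div_dvd_two_pow_div p.isLt (by omega))
        (mod_eq_of_bflySupp_apply_ne_zero (hX p i j hXp))
  refine JkronI_apply_ne_zero_of_mod_eq (not_not.1 fun hne => hab ?_)
  exact Matrix.list_prod_apply_eq_zero_of_ne (fun i : Fin (2 ^ L) => (i : ℕ) % (2 ^ L / 2 ^ ℓ))
    (List.forall_mem_ofFn_iff.2 hfactor) hne
end
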